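/- arXiv:2407.11703 — 6 statements merged into one kernel-verified Lean document; each statement's English description precedes it below -/
import Mathlib

section
/- Let Q be a real Hilbert space, let ξ ∈ (0,1), let B : Q → Q be a bounded, symmetric, positive definite linear operator, and let y, d̃ ∈ Q with y ≠ 0. Define the damped vector d̃' = θ d̃ + (1−θ) B y, where θ = 1 if ⟨y, d̃⟩ ≥ ξ⟨y, B y⟩ and θ = (1−ξ)⟨y, B y⟩ / (⟨y, B y⟩ − ⟨y, d̃⟩) otherwise. Then ⟨y, d̃'⟩ > 0, and the inverse BFGS update B⁺ of B by the pair (d̃', y) is positive definite. -/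
open RealInnerProductSpace

/-- Damped inverse BFGS update: positivity of the damped curvature and
positive definiteness of the inverse BFGS update by the pair (d̃', y). -/
theorem damped_inverse_bfgs_update_posDef
    {Q : Type*} [NormedAddCommGroup Q] [InnerProductSpace ℝ Q] [CompleteSpace Q]
    (ξ : ℝ) (hξ : ξ ∈ Set.Ioo (0 : ℝ) 1)
    (B : Q →L[ℝ] Q)
    (hsymm : ∀ x w : Q, ⟪B x, w⟫ = ⟪x, B w⟫)
    (hpos : ∀ p : Q, p ≠ 0 → 0 < ⟪p, B p⟫)
    (y d : Q) (hy : y ≠ 0)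
    (θ : ℝ)
    (hθ : θ = if ξ * ⟪y, B y⟫ ≤ ⟪y, d⟫ then (1 : ℝ)
          else (1 - ξ) * ⟪y, B y⟫ / (⟪y, B y⟫ - ⟪y, d⟫))
    (d' : Q) (hd' : d' = θ • d + (1 - θ) • B y)
    (Bplus : Q →L[ℝ] Q)
    (hBplus : ∀ p : Q, Bplus p =
      B p + (⟪d', y⟫)⁻¹ • (⟪d', p⟫ • (d' - B y) + ⟪d' - B y, p⟫ • d')
        - (⟪d' - B y, y⟫ * ⟪d', p⟫ / ⟪d', y⟫ ^ 2) • d') :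
    0 < ⟪y, d'⟫ ∧ ∀ p : Q, p ≠ 0 → 0 < ⟪p, Bplus p⟫ := by
  obtain ⟨hξ0, hξ1⟩ := hξ
  have hbpos : 0 < ⟪y, B y⟫ := hpos y hy
  have hyd' : 0 < ⟪y, d'⟫ := by
    rw [hd', inner_add_right, real_inner_smul_right, real_inner_smul_right]
    split_ifs at hθ with h
    · rw [hθ]
      have := mul_pos hξ0 hbpos
      nlinarith
    · push_neg at h
      have hden : 0 < ⟪y, B y⟫ - ⟪y, d⟫ := by nlinarith
      rw [hθ]
      have key : (1-ξ)*⟪y, B y⟫/(⟪y, B y⟫-⟪y,d⟫) * ⟪y,d⟫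
          + (1 - (1-ξ)*⟪y, B y⟫/(⟪y, B y⟫-⟪y,d⟫)) * ⟪y, B y⟫ = ξ*⟪y, B y⟫ := by
        field_simp
        ring
      rw [key]
      positivity
  refine ⟨hyd', fun p hp => ?_⟩
  have hc : 0 < ⟪d', y⟫ := by rwa [real_inner_comm]
  have hcne : ⟪d', y⟫ ≠ 0 := ne_of_gt hc
  set c := ⟪d', y⟫ with hcdef
  set a := ⟪d', p⟫ with hadef
  set q := p - (a / c) • y with hq
  have key : ⟪p, Bplus p⟫ = ⟪q, B q⟫ + a ^ 2 / c := by
    rw [hBplus p, hq]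
    simp only [inner_add_right, inner_sub_right, inner_sub_left, real_inner_smul_right,
      real_inner_smul_left, map_sub, map_smul, ContinuousLinearMap.coe_smul',
      Pi.smul_apply]
    have h1 : ⟪p, d'⟫ = a := (real_inner_comm d' p).trans rfl
    have h2 : ⟪p, B y⟫ = ⟪y, B p⟫ := by rw [← hsymm, real_inner_comm]
    rw [h1, h2, hsymm y p, hsymm y y]
    field_simp
    ring
  rw [key]
  rcases eq_or_ne q 0 with hq0 | hq0
  · have hane : a ≠ 0 := by
      intro ha
      apply hp
      have : p = (a / c) • y := by
        have := hq0
        rw [hq, sub_eq_zero] at this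
        exact this
      rw [this, ha, zero_div, zero_smul]
    rw [hq0, inner_zero_left]
    have : 0 < a ^ 2 / c := div_pos (by positivity) hc
    linarith
  · have h1 : 0 < ⟪q, B q⟫ := hpos q hq0
    have h2 : 0 ≤ a ^ 2 / c := div_nonneg (by positivity) hc.le
    linarith
end

section
/- Let Q be a real Hilbert space, ξ ∈ (0,1), B : Q → Q a bounded, symmetric, positive definite linear operator, and y, d̃ ∈ Q with y ≠ 0. Define d̃' = θ d̃ + (1−θ) B y, where θ = 1 if ⟨y, d̃⟩ ≥ ξ⟨y, B y⟩ and θ = (1−ξ)⟨y, B y⟩ / (⟨y, B y⟩ − ⟨y, d̃⟩) otherwise. Then ⟨y, d̃'⟩ ≥ ξ⟨y, B y⟩ > 0. -/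
open RealInnerProductSpace

/-- The damping step guarantees the curvature condition ⟨y, d̃'⟩ ≥ ξ⟨y, By⟩ > 0. -/
theorem damped_curvature_bound
    {Q : Type*} [NormedAddCommGroup Q] [InnerProductSpace ℝ Q] [CompleteSpace Q]
    (ξ : ℝ) (hξ : ξ ∈ Set.Ioo (0 : ℝ) 1)
    (B : Q →L[ℝ] Q)
    (hsymm : ∀ x w : Q, ⟪B x, w⟫ = ⟪x, B w⟫)
    (hpos : ∀ p : Q, p ≠ 0 → 0 < ⟪p, B p⟫)
    (y d : Q) (hy : y ≠ 0)
    (θ : ℝ)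
    (hθ : θ = if ξ * ⟪y, B y⟫ ≤ ⟪y, d⟫ then (1 : ℝ)
          else (1 - ξ) * ⟪y, B y⟫ / (⟪y, B y⟫ - ⟪y, d⟫))
    (d' : Q) (hd' : d' = θ • d + (1 - θ) • B y) :
    ξ * ⟪y, B y⟫ ≤ ⟪y, d'⟫ ∧ 0 < ξ * ⟪y, B y⟫ := by
  have ha : 0 < ⟪y, B y⟫ := hpos y hy
  have hpos2 : 0 < ξ * ⟪y, B y⟫ := mul_pos hξ.1 ha
  refine ⟨?_, hpos2⟩
  have hinner : ⟪y, d'⟫ = θ * ⟪y, d⟫ + (1 - θ) * ⟪y, B y⟫ := by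
    rw [hd']
    simp [inner_add_right, real_inner_smul_right]
  rw [hinner]
  by_cases h : ξ * ⟪y, B y⟫ ≤ ⟪y, d⟫
  · rw [hθ, if_pos h]; ring_nf; linarith
  · rw [hθ, if_neg h]
    push_neg at h
    have hlt : ⟪y, d⟫ < ⟪y, B y⟫ := lt_of_lt_of_le h (by nlinarith [hξ.2])
    have hne : ⟪y, B y⟫ - ⟪y, d⟫ ≠ 0 := by linarith
    field_simp
    rw [le_div_iff₀ (by linarith : (0:ℝ) < ⟪y, B y⟫ - ⟪y, d⟫)]
    nlinarith
end

section
/- Let Q be a real Hilbert space, B : Q → Q a bounded, symmetric, positive definite linear operator, and d̃, y ∈ Q with ⟨d̃, y⟩ > 0. Then the inverse BFGS update B⁺ of B by the pair (d̃, y) is positive definite. -/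
open RealInnerProductSpace

/-- If the curvature ⟨d̃, y⟩ is positive and B is symmetric positive definite,
then the inverse BFGS update of B by the pair (d̃, y) is positive definite. -/
theorem inverse_bfgs_update_posDef
    {Q : Type*} [NormedAddCommGroup Q] [InnerProductSpace ℝ Q] [CompleteSpace Q]
    (B : Q →L[ℝ] Q)
    (hsymm : ∀ x w : Q, ⟪B x, w⟫ = ⟪x, B w⟫)
    (hpos : ∀ p : Q, p ≠ 0 → 0 < ⟪p, B p⟫)
    (d y : Q) (hdy : 0 < ⟪d, y⟫)
    (Bplus : Q →L[ℝ] Q)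
    (hBplus : ∀ p : Q, Bplus p =
      B p + (⟪d, y⟫)⁻¹ • (⟪d, p⟫ • (d - B y) + ⟪d - B y, p⟫ • d)
        - (⟪d - B y, y⟫ * ⟪d, p⟫ / ⟪d, y⟫ ^ 2) • d) :
    ∀ p : Q, p ≠ 0 → 0 < ⟪p, Bplus p⟫ := by
  intro p hp
  have htne : ⟪d, y⟫ ≠ 0 := ne_of_gt hdy
  set q : Q := p - (⟪d, p⟫ / ⟪d, y⟫) • y with hq
  have hsym1 : ⟪p, B y⟫ = ⟪y, B p⟫ := by rw [← hsymm, real_inner_comm]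
  have key : ⟪p, Bplus p⟫ = ⟪q, B q⟫ + ⟪d, p⟫ ^ 2 / ⟪d, y⟫ := by
    rw [hBplus, hq]
    simp only [map_sub, map_smul, inner_sub_left, inner_sub_right, inner_add_right,
      real_inner_smul_left, real_inner_smul_right, smul_eq_mul]
    rw [real_inner_comm p d]
    field_simp
    rw [hsymm y y, hsymm y p]
    ring
  rw [key]
  by_cases hq0 : q = 0
  · have hc0 : ⟪d, p⟫ ≠ 0 := by
      intro h0
      apply hp
      have := hq0
      rw [hq, h0] at this
      simpa using this
    have hz : ⟪q, B q⟫ = 0 := by rw [hq0]; simp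
    rw [hz]
    have : 0 < ⟪d, p⟫ ^ 2 / ⟪d, y⟫ := by positivity
    linarith
  · have h1 := hpos q hq0
    have h2 : 0 ≤ ⟪d, p⟫ ^ 2 / ⟪d, y⟫ := by positivity
    linarith
end

section
/- Let Q be a real Hilbert space, B : Q → Q a bounded, symmetric, positive definite linear operator, and d̃, y ∈ Q with ⟨d̃, y⟩ > 0. Then the inverse BFGS update B⁺ of B by the pair (d̃, y) satisfies ⟨p, B⁺ p⟩ ≥ ⟨d̃, p⟩² / ⟨d̃, y⟩ for every p ∈ Q. -/
/-!
Write `a = ⟪d, p⟫` and `s = ⟪d, y⟫`. Expanding both quadratic forms with the symmetry of `B`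
gives the exact identity `⟪p, B⁺ p⟫ = ⟪u, B u⟫ + a² / s` for `u = p - (a / s) • y`, and
`⟪u, B u⟫ ≥ 0` because `B` is positive definite.
-/

open RealInnerProductSpace

section

variable {Q : Type*} [NormedAddCommGroup Q] [InnerProductSpace ℝ Q]

noncomputable def inverseBFGSUpdate (B : Q →L[ℝ] Q) (d y p : Q) : Q :=
  B p + (⟪d, y⟫)⁻¹ • (⟪d, p⟫ • (d - B y) + ⟪d - B y, p⟫ • d)
    - (⟪d - B y, y⟫ * ⟪d, p⟫ / ⟪d, y⟫ ^ 2) • d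

variable {B : Q →L[ℝ] Q}

theorem inner_sub_smul_map_sub_smul (hB : (B : Q →ₗ[ℝ] Q).IsSymmetric) (p y : Q) (t : ℝ) :
    ⟪p - t • y, B (p - t • y)⟫ = ⟪p, B p⟫ - 2 * t * ⟪B y, p⟫ + t ^ 2 * ⟪y, B y⟫ := by
  have hyp : ⟪y, B p⟫ = ⟪B y, p⟫ := (hB.apply_clm y p).symm
  have hpy : ⟪p, B y⟫ = ⟪B y, p⟫ := real_inner_comm _ _
  simp only [map_sub, map_smul, inner_sub_left, inner_sub_right, real_inner_smul_left,
    real_inner_smul_right, hyp, hpy]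
  ring

theorem inner_inverseBFGSUpdate (hB : (B : Q →ₗ[ℝ] Q).IsSymmetric) (d y p : Q) :
    ⟪p, inverseBFGSUpdate B d y p⟫ =
      ⟪p, B p⟫ + 2 * ⟪d, p⟫ * (⟪d, p⟫ - ⟪B y, p⟫) / ⟪d, y⟫
        - (⟪d, y⟫ - ⟪y, B y⟫) * ⟪d, p⟫ ^ 2 / ⟪d, y⟫ ^ 2 := by
  have hpd : ⟪p, d⟫ = ⟪d, p⟫ := real_inner_comm _ _
  have hpy : ⟪p, B y⟫ = ⟪B y, p⟫ := real_inner_comm _ _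
  have hyy : ⟪B y, y⟫ = ⟪y, B y⟫ := hB.apply_clm y y
  simp only [inverseBFGSUpdate, inner_sub_left, inner_sub_right, inner_add_right,
    real_inner_smul_right, hpd, hpy, hyy]
  ring

theorem inner_inverseBFGSUpdate_eq (hB : (B : Q →ₗ[ℝ] Q).IsSymmetric) {d y : Q}
    (hdy : ⟪d, y⟫ ≠ 0) (p : Q) :
    ⟪p, inverseBFGSUpdate B d y p⟫ =
      ⟪p - (⟪d, p⟫ / ⟪d, y⟫) • y, B (p - (⟪d, p⟫ / ⟪d, y⟫) • y)⟫ + ⟪d, p⟫ ^ 2 / ⟪d, y⟫ := by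
  rw [inner_inverseBFGSUpdate hB, inner_sub_smul_map_sub_smul hB]
  field_simp
  ring

theorem inner_self_map_nonneg_of_pos (hpos : ∀ p : Q, p ≠ 0 → 0 < ⟪p, B p⟫) (u : Q) :
    0 ≤ ⟪u, B u⟫ := by
  rcases eq_or_ne u 0 with rfl | hu
  · simp
  · exact (hpos u hu).le

theorem div_le_inner_inverseBFGSUpdate (hB : (B : Q →ₗ[ℝ] Q).IsSymmetric)
    (hpos : ∀ p : Q, p ≠ 0 → 0 < ⟪p, B p⟫) {d y : Q} (hdy : ⟪d, y⟫ ≠ 0) (p : Q) :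
    ⟪d, p⟫ ^ 2 / ⟪d, y⟫ ≤ ⟪p, inverseBFGSUpdate B d y p⟫ := by
  rw [inner_inverseBFGSUpdate_eq hB hdy]
  exact le_add_of_nonneg_left (inner_self_map_nonneg_of_pos hpos _)

end

theorem inverse_bfgs_update_quadratic_lower_bound_general
    {Q : Type*} [NormedAddCommGroup Q] [InnerProductSpace ℝ Q]
    (B : Q →L[ℝ] Q)
    (hsymm : ∀ x w : Q, ⟪B x, w⟫ = ⟪x, B w⟫)
    (hpos : ∀ p : Q, p ≠ 0 → 0 < ⟪p, B p⟫)
    (d y : Q) (hdy : 0 < ⟪d, y⟫)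
    (Bplus : Q →L[ℝ] Q)
    (hBplus : ∀ p : Q, Bplus p =
      B p + (⟪d, y⟫)⁻¹ • (⟪d, p⟫ • (d - B y) + ⟪d - B y, p⟫ • d)
        - (⟪d - B y, y⟫ * ⟪d, p⟫ / ⟪d, y⟫ ^ 2) • d) :
    ∀ p : Q, ⟪d, p⟫ ^ 2 / ⟪d, y⟫ ≤ ⟪p, Bplus p⟫ := by
  intro p
  rw [hBplus]
  exact div_le_inner_inverseBFGSUpdate hsymm hpos hdy.ne' p

/-- Lower bound for the quadratic form of the inverse BFGS update. -/
theorem inverse_bfgs_update_quadratic_lower_bound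
    {Q : Type*} [NormedAddCommGroup Q] [InnerProductSpace ℝ Q] [CompleteSpace Q]
    (B : Q →L[ℝ] Q)
    (hsymm : ∀ x w : Q, ⟪B x, w⟫ = ⟪x, B w⟫)
    (hpos : ∀ p : Q, p ≠ 0 → 0 < ⟪p, B p⟫)
    (d y : Q) (hdy : 0 < ⟪d, y⟫)
    (Bplus : Q →L[ℝ] Q)
    (hBplus : ∀ p : Q, Bplus p =
      B p + (⟪d, y⟫)⁻¹ • (⟪d, p⟫ • (d - B y) + ⟪d - B y, p⟫ • d)
        - (⟪d - B y, y⟫ * ⟪d, p⟫ / ⟪d, y⟫ ^ 2) • d) :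
    ∀ p : Q, ⟪d, p⟫ ^ 2 / ⟪d, y⟫ ≤ ⟪p, Bplus p⟫ :=
  inverse_bfgs_update_quadratic_lower_bound_general B hsymm hpos d y hdy Bplus hBplus
end

section
/- Let F : ℝ² → ℝ² be twice continuously differentiable with det(DF(x̂)) > 0 for all x̂, where DF denotes the Fréchet derivative of F, and let u : ℝ² → ℝ² be continuously differentiable. Define the covariant Piola pullback û : ℝ² → ℝ² by û(x̂) = (DF(x̂))ᵀ u(F(x̂)). Then for every x̂ ∈ ℝ² the scalar curls satisfy (curl u)(F(x̂)) = (1 / det(DF(x̂))) · (curl û)(x̂), where for a vector field v = (v₁, v₂) the scalar curl is curl v = ∂₁ v₂ − ∂₂ v₁. -/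
/-- Jacobian matrix of a map `F : ℝ² → ℝ²` at a point. -/
noncomputable def jacobian2 (F : (Fin 2 → ℝ) → (Fin 2 → ℝ)) (x : Fin 2 → ℝ) :
    Matrix (Fin 2) (Fin 2) ℝ :=
  Matrix.of fun i j => fderiv ℝ F x (Pi.single j 1) i

/-- Scalar curl of a planar vector field: curl v = ∂₁v₂ − ∂₂v₁. -/
noncomputable def scalarCurl (v : (Fin 2 → ℝ) → (Fin 2 → ℝ)) (x : Fin 2 → ℝ) : ℝ :=
  fderiv ℝ (fun y => v y 1) x (Pi.single 0 1) - fderiv ℝ (fun y => v y 0) x (Pi.single 1 1)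

/-!
Identify a vector field `v` on `ℝⁿ` with the 1-form `w ↦ v ⬝ᵥ w`. Then the covariant Piola
transform `û = DFᵀ (u ∘ F)` is the pullback `F^* u`, and the scalar curl is the exterior
derivative evaluated on the standard basis. The exterior derivative commutes with pullback by a
`C²` map (the second derivatives of `F` cancel by their symmetry), so
`curl û (x̂) = du (F x̂) (DF e₀, DF e₁)`, and a 2-form on `ℝ²` evaluated on the image of a basis
under `DF` is multiplied by `det DF`.
-/

open ContinuousAlternatingMap Matrix

theorem ContinuousAlternatingMap.compContinuousLinearMap_apply_basis {R M ι : Type*}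
    [CommRing R] [TopologicalSpace R] [AddCommGroup M] [Module R M] [TopologicalSpace M]
    [Fintype ι] [DecidableEq ι] (β : M [⋀^ι]→L[R] R) (L : M →L[R] M)
    (b : Module.Basis ι R M) :
    β.compContinuousLinearMap L b = LinearMap.det (L : M →ₗ[R] M) * β b := by
  change β.toAlternatingMap ((L : M →ₗ[R] M) ∘ b) = _ * β.toAlternatingMap b
  rw [β.toAlternatingMap.eq_smul_basis_det b]
  simp only [AlternatingMap.smul_apply, smul_eq_mul, Module.Basis.det_comp,
    Module.Basis.det_self]
  ring

section DotProduct

variable {ι κ : Type*} [Fintype ι] [Fintype κ]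

noncomputable def dotProductOneForm : (ι → ℝ) →L[ℝ] (ι → ℝ) [⋀^Fin 1]→L[ℝ] ℝ :=
  LinearMap.toContinuousLinearMap <|
    (ofSubsingletonLIE 0).toLinearEquiv.toLinearMap ∘ₗ
      LinearMap.toContinuousLinearMap.toLinearMap ∘ₗ dotProductBilin ℝ ℝ

@[simp]
theorem dotProductOneForm_apply (a : ι → ℝ) (w : Fin 1 → ι → ℝ) :
    dotProductOneForm a w = a ⬝ᵥ w 0 :=
  rfl

theorem dotProductOneForm_transpose_mulVec [DecidableEq κ] (L : (κ → ℝ) →L[ℝ] ι → ℝ)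
    (a : ι → ℝ) :
    dotProductOneForm ((LinearMap.toMatrix' (L : (κ → ℝ) →ₗ[ℝ] ι → ℝ))ᵀ *ᵥ a) =
      (dotProductOneForm a).compContinuousLinearMap L := by
  ext w
  simp [mulVec_transpose, ← dotProduct_mulVec, LinearMap.toMatrix'_mulVec]

end DotProduct

theorem jacobian2_eq_toMatrix' (F : (Fin 2 → ℝ) → Fin 2 → ℝ) (x : Fin 2 → ℝ) :
    jacobian2 F x = LinearMap.toMatrix' (fderiv ℝ F x : (Fin 2 → ℝ) →ₗ[ℝ] Fin 2 → ℝ) :=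
  rfl

theorem scalarCurl_eq_extDeriv {v : (Fin 2 → ℝ) → Fin 2 → ℝ} {x : Fin 2 → ℝ}
    (hv : DifferentiableAt ℝ (fun y => dotProductOneForm (v y)) x) :
    scalarCurl v x =
      extDeriv (fun y => dotProductOneForm (v y)) x (Pi.basisFun ℝ (Fin 2)) := by
  rw [extDeriv_apply hv]
  simp [Fin.sum_univ_two, Fin.removeNth, scalarCurl, sub_eq_add_neg]

/-- Transformation of the scalar curl under the covariant Piola mapping in 2D:
(curl u)(F(x̂)) = (1/det DF(x̂)) (curl û)(x̂). -/
theorem piola_curl_transform_2d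
    (F : (Fin 2 → ℝ) → (Fin 2 → ℝ)) (hF : ContDiff ℝ 2 F)
    (hdet : ∀ x : Fin 2 → ℝ, 0 < (jacobian2 F x).det)
    (u : (Fin 2 → ℝ) → (Fin 2 → ℝ)) (hu : ContDiff ℝ 1 u)
    (uhat : (Fin 2 → ℝ) → (Fin 2 → ℝ))
    (huhat : ∀ x : Fin 2 → ℝ, uhat x = (jacobian2 F x).transpose.mulVec (u (F x))) :
    ∀ x : Fin 2 → ℝ,
      scalarCurl u (F x) = (1 / (jacobian2 F x).det) * scalarCurl uhat x := by
  intro x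
  have hform : (fun y => dotProductOneForm (uhat y)) =
      fun y => (dotProductOneForm (u (F y))).compContinuousLinearMap (fderiv ℝ F y) := by
    funext y
    rw [huhat, jacobian2_eq_toMatrix', dotProductOneForm_transpose_mulVec]
  have hω : DifferentiableAt ℝ (fun z => dotProductOneForm (u z)) (F x) :=
    dotProductOneForm.differentiableAt.comp _ (hu.differentiable one_ne_zero _)
  have hω_pullback : DifferentiableAt ℝ (fun y => dotProductOneForm (uhat y)) x := by
    rw [hform]
    exact (hω.comp x (hF.differentiable two_ne_zero x))
      |>.continuousAlternatingMapCompContinuousLinearMap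
        ((hF.fderiv_right le_rfl).differentiable one_ne_zero x)
  have hcurl : scalarCurl uhat x = (jacobian2 F x).det * scalarCurl u (F x) := by
    rw [scalarCurl_eq_extDeriv hω_pullback, hform, extDeriv_pullback hω hF.contDiffAt (by simp),
      compContinuousLinearMap_apply_basis, scalarCurl_eq_extDeriv hω, jacobian2_eq_toMatrix',
      LinearMap.det_toMatrix']
  rw [hcurl, one_div, inv_mul_cancel_left₀ (hdet x).ne']
end

section
/- Let F : ℝ³ → ℝ³ be twice continuously differentiable with det(DF(x̂)) > 0 for all x̂, where DF denotes the Fréchet derivative of F, and let u : ℝ³ → ℝ³ be continuously differentiable. Define the covariant Piola pullback û : ℝ³ → ℝ³ by û(x̂) = (DF(x̂))ᵀ u(F(x̂)). Then for every x̂ ∈ ℝ³ it holds that (∇ × u)(F(x̂)) = (1 / det(DF(x̂))) · DF(x̂) (∇ × û)(x̂), where ∇ × v denotes the curl of a vector field v : ℝ³ → ℝ³, i.e., the vector field with components (∂₂v₃ − ∂₃v₂, ∂₃v₁ − ∂₁v₃, ∂₁v₂ − ∂₂v₁). -/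
/-- Jacobian matrix of a map `F : ℝ³ → ℝ³` at a point. -/
noncomputable def jacobian3 (F : (Fin 3 → ℝ) → (Fin 3 → ℝ)) (x : Fin 3 → ℝ) :
    Matrix (Fin 3) (Fin 3) ℝ :=
  Matrix.of fun i j => fderiv ℝ F x (Pi.single j 1) i

/-- Partial derivative of a scalar function in the j-th coordinate direction. -/
noncomputable def pderiv3 (g : (Fin 3 → ℝ) → ℝ) (j : Fin 3) (x : Fin 3 → ℝ) : ℝ :=
  fderiv ℝ g x (Pi.single j 1)

/-- Curl of a vector field in ℝ³:
∇ × v = (∂₂v₃ − ∂₃v₂, ∂₃v₁ − ∂₁v₃, ∂₁v₂ − ∂₂v₁). -/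
noncomputable def curl3 (v : (Fin 3 → ℝ) → (Fin 3 → ℝ)) (x : Fin 3 → ℝ) : Fin 3 → ℝ :=
  ![pderiv3 (fun y => v y 2) 1 x - pderiv3 (fun y => v y 1) 2 x,
    pderiv3 (fun y => v y 0) 2 x - pderiv3 (fun y => v y 2) 0 x,
    pderiv3 (fun y => v y 1) 0 x - pderiv3 (fun y => v y 0) 1 x]

/-!
The curl of `v` at a point is the axial vector of the skew part of the Jacobian `Dv`.
Differentiating `û = DFᵀ (u ∘ F)` gives `Dû = H + DFᵀ (Du ∘ F) DF`, where
`H i k = ∂ₖ∂ᵢF · u ∘ F` is symmetric by Schwarz's theorem and so has no skew part.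
For every `3 × 3` matrix `A`, the axial vector of the skew part of `Aᵀ M A` is `adj A` times
that of `M`. Hence `∇ × û = adj DF ((∇ × u) ∘ F)`, and `DF adj DF = det DF • 1` gives the claim.
-/

open Matrix

section Axial

variable {R : Type*} [CommRing R]

/-- The axial vector of the skew part `M - Mᵀ`. -/
def axialVec (M : Matrix (Fin 3) (Fin 3) R) : Fin 3 → R :=
  ![M 2 1 - M 1 2, M 0 2 - M 2 0, M 1 0 - M 0 1]

theorem axialVec_add (M N : Matrix (Fin 3) (Fin 3) R) :
    axialVec (M + N) = axialVec M + axialVec N := by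
  ext i; fin_cases i <;> simp [axialVec] <;> ring

theorem axialVec_eq_zero_of_isSymm {M : Matrix (Fin 3) (Fin 3) R} (hM : M.IsSymm) :
    axialVec M = 0 := by
  ext i; fin_cases i <;> simp [axialVec, hM.apply]

theorem axialVec_transpose_mul_mul (A M : Matrix (Fin 3) (Fin 3) R) :
    axialVec (Aᵀ * M * A) = A.adjugate *ᵥ axialVec M := by
  ext i; fin_cases i <;>
    simp [axialVec, mul_apply, adjugate_fin_three, Fin.sum_univ_three, mulVec, dotProduct] <;> ring

end Axial

theorem fderiv_dotProduct_apply {𝕜 E ι : Type*} [NontriviallyNormedField 𝕜] [NormedAddCommGroup E]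
    [NormedSpace 𝕜 E] [Fintype ι] {f g : E → ι → 𝕜} {x : E} (hf : DifferentiableAt 𝕜 f x)
    (hg : DifferentiableAt 𝕜 g x) (v : E) :
    fderiv 𝕜 (fun y => f y ⬝ᵥ g y) x v = fderiv 𝕜 f x v ⬝ᵥ g x + f x ⬝ᵥ fderiv 𝕜 g x v := by
  have hcoord (i : ι) : HasFDerivAt (fun y => f y i * g y i)
      (f x i • (ContinuousLinearMap.proj i).comp (fderiv 𝕜 g x)
        + g x i • (ContinuousLinearMap.proj i).comp (fderiv 𝕜 f x)) x :=
    (hasFDerivAt_pi'.1 hf.hasFDerivAt i).mul (hasFDerivAt_pi'.1 hg.hasFDerivAt i)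
  rw [show (fun y => f y ⬝ᵥ g y) = fun y => ∑ i, f y i * g y i from rfl,
    (HasFDerivAt.fun_sum fun i _ => hcoord i).fderiv]
  simp [dotProduct, Finset.sum_add_distrib, mul_comm, add_comm]

theorem transpose_mul_mul_apply {n R : Type*} [Fintype n] [CommSemiring R] (A M : Matrix n n R)
    (i k : n) : (Aᵀ * M * A) i k = A.col i ⬝ᵥ M *ᵥ A.col k := by
  rw [Matrix.mul_assoc]
  simp [mul_apply, dotProduct, mulVec]

/-- Agrees with `jacobian3 v x` only where `v` is differentiable (`partialMatrix3_eq_jacobian3`). -/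
noncomputable def partialMatrix3 (v : (Fin 3 → ℝ) → Fin 3 → ℝ) (x : Fin 3 → ℝ) :
    Matrix (Fin 3) (Fin 3) ℝ :=
  of fun i j => pderiv3 (fun y => v y i) j x

theorem curl3_eq_axialVec (v : (Fin 3 → ℝ) → Fin 3 → ℝ) (x : Fin 3 → ℝ) :
    curl3 v x = axialVec (partialMatrix3 v x) := rfl

theorem partialMatrix3_eq_jacobian3 {v : (Fin 3 → ℝ) → Fin 3 → ℝ} {x : Fin 3 → ℝ}
    (hv : DifferentiableAt ℝ v x) : partialMatrix3 v x = jacobian3 v x := by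
  ext i j; simp [partialMatrix3, jacobian3, pderiv3, fderiv_apply hv]

theorem jacobian3_mulVec (F : (Fin 3 → ℝ) → Fin 3 → ℝ) (x w : Fin 3 → ℝ) :
    jacobian3 F x *ᵥ w = fderiv ℝ F x w := by
  have hmat : jacobian3 F x =
      LinearMap.toMatrix' (fderiv ℝ F x : (Fin 3 → ℝ) →ₗ[ℝ] Fin 3 → ℝ) := by
    ext i j; simp [jacobian3, LinearMap.toMatrix'_apply]
  rw [hmat, LinearMap.toMatrix'_mulVec]; rfl

noncomputable def covariantPiola (F u : (Fin 3 → ℝ) → Fin 3 → ℝ) (x : Fin 3 → ℝ) : Fin 3 → ℝ :=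
  (jacobian3 F x)ᵀ *ᵥ u (F x)

theorem covariantPiola_apply (F u : (Fin 3 → ℝ) → Fin 3 → ℝ) (x : Fin 3 → ℝ) (i : Fin 3) :
    covariantPiola F u x i = fderiv ℝ F x (Pi.single i 1) ⬝ᵥ u (F x) := rfl

theorem partialMatrix3_covariantPiola {F u : (Fin 3 → ℝ) → Fin 3 → ℝ} {x : Fin 3 → ℝ}
    (hF : DifferentiableAt ℝ F x) (hF' : DifferentiableAt ℝ (fderiv ℝ F) x)
    (hu : DifferentiableAt ℝ u (F x)) :
    partialMatrix3 (covariantPiola F u) x =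
      of (fun i k => fderiv ℝ (fderiv ℝ F) x (Pi.single k 1) (Pi.single i 1) ⬝ᵥ u (F x))
        + (jacobian3 F x)ᵀ * jacobian3 u (F x) * jacobian3 F x := by
  ext i k
  have hcol : DifferentiableAt ℝ (fun y => fderiv ℝ F y (Pi.single i 1)) x :=
    hF'.clm_apply (differentiableAt_const _)
  have hcomp : DifferentiableAt ℝ (fun y => u (F y)) x := hu.comp x hF
  rw [partialMatrix3, of_apply, pderiv3, funext (covariantPiola_apply F u · i),
    fderiv_dotProduct_apply hcol hcomp, fderiv_clm_apply hF' (differentiableAt_const _),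
    fderiv_fun_comp x hu hF]
  simp [← jacobian3_mulVec, transpose_mul_mul_apply]

theorem curl3_covariantPiola {F u : (Fin 3 → ℝ) → Fin 3 → ℝ} {x : Fin 3 → ℝ}
    (hF : ContDiffAt ℝ 2 F x) (hu : DifferentiableAt ℝ u (F x)) :
    curl3 (covariantPiola F u) x = (jacobian3 F x).adjugate *ᵥ curl3 u (F x) := by
  have hF' : DifferentiableAt ℝ (fderiv ℝ F) x :=
    (hF.fderiv_right (m := 1) le_rfl).differentiableAt one_ne_zero
  have hHess : (of fun i k =>
      fderiv ℝ (fderiv ℝ F) x (Pi.single k 1) (Pi.single i 1) ⬝ᵥ u (F x)).IsSymm := by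
    ext i k
    simp [(hF.isSymmSndFDerivAt (by simp)).eq (Pi.single i 1)]
  rw [curl3_eq_axialVec, partialMatrix3_covariantPiola (hF.differentiableAt two_ne_zero) hF' hu,
    axialVec_add, axialVec_eq_zero_of_isSymm hHess, zero_add, axialVec_transpose_mul_mul,
    curl3_eq_axialVec, partialMatrix3_eq_jacobian3 hu]

/-- Transformation of the curl under the covariant Piola mapping in 3D:
(∇ × u)(F(x̂)) = (1/det DF(x̂)) DF(x̂) (∇ × û)(x̂). -/
theorem piola_curl_transform_3d
    (F : (Fin 3 → ℝ) → (Fin 3 → ℝ)) (hF : ContDiff ℝ 2 F)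
    (hdet : ∀ x : Fin 3 → ℝ, 0 < (jacobian3 F x).det)
    (u : (Fin 3 → ℝ) → (Fin 3 → ℝ)) (hu : ContDiff ℝ 1 u)
    (uhat : (Fin 3 → ℝ) → (Fin 3 → ℝ))
    (huhat : ∀ x : Fin 3 → ℝ, uhat x = (jacobian3 F x).transpose.mulVec (u (F x))) :
    ∀ x : Fin 3 → ℝ,
      curl3 u (F x) = (1 / (jacobian3 F x).det) • (jacobian3 F x).mulVec (curl3 uhat x) := by
  intro x
  obtain rfl : uhat = covariantPiola F u := funext huhat
  rw [curl3_covariantPiola hF.contDiffAt (hu.differentiable one_ne_zero _), mulVec_mulVec,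
    mul_adjugate, smul_mulVec, one_mulVec, smul_smul, one_div_mul_cancel (hdet x).ne', one_smul]
end
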